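/- Fix an integer T ≥ 1, p ∈ (0,1], a point x ∈ ℝ^T, and let z be a Bernoulli(p) random variable. Define the random vector ĝ(x) ∈ ℝ^T coordinatewise by [ĝ(x)]_j = ∂_j f̂_T(x) · (1 + 1{j > prog(x)} (z/p − 1)). Then E[ĝ(x)] = ∇ f̂_T(x), and E‖ĝ(x) − ∇ f̂_T(x)‖₂² = |∂_{prog(x)+1} f̂_T(x)|² · (1 − p)/p ≤ 23² (1 − p)/p (where the middle term is interpreted as 0 if prog(x) = T). -/

import Mathlib

/-!
In the paper's 1-based indexing, with `x₀ := 1`: along a coordinate `j > prog x`, `f̂_T` changes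
only through the link `Ψ(-x_{j-1})Φ(-x_j) - Ψ(x_{j-1})Φ(x_j)`, since the next link carries the
factor `Ψ(±x_j)`, which vanishes while `|x_j| ≤ 1/2`. Hence
`∂_j f̂_T(x) = -(Ψ(-x_{j-1}) + Ψ(x_{j-1}))√e`, which is `0` for `j > prog x + 1` and at most
`2e√e < 23` in absolute value for `j = prog x + 1`. So the oracle is `∇f̂_T(x) + (z/p - 1)·v`
with `v` supported on the coordinate `prog x + 1`, and `z/p - 1` has mean `0` and second moment
`(1 - p)/p`.
-/

/-- Ψ(z) = 0 for z ≤ 1/2 and Ψ(z) = exp(1 − 1/(2z−1)²) for z > 1/2. -/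
noncomputable def Psi (z : ℝ) : ℝ :=
  if z ≤ 1/2 then 0 else Real.exp (1 - 1/(2*z - 1)^2)

/-- Φ(z) = √e ∫_{−∞}^{z} exp(−t²/2) dt. -/
noncomputable def Phi (z : ℝ) : ℝ :=
  Real.sqrt (Real.exp 1) * ∫ t in Set.Iic z, Real.exp (-t^2/2)

/-- The 1-based `i`-th coordinate of `x` (junk value 0 out of range): `coord x i = x_{i+1}`
in 0-based terms. -/
noncomputable def coord {T : ℕ} (x : EuclideanSpace ℝ (Fin T)) (i : ℕ) : ℝ :=
  if h : i < T then x ⟨i, h⟩ else 0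

/-- f̂_T(x) = −Ψ(1)Φ(x₁) + Σ_{i=1}^{T−1} [Ψ(−x_i)Φ(−x_{i+1}) − Ψ(x_i)Φ(x_{i+1})],
where the 1-based coordinate x_i is `coord x (i-1)`. -/
noncomputable def fhat (T : ℕ) (x : EuclideanSpace ℝ (Fin T)) : ℝ :=
  -(Psi 1) * Phi (coord x 0) +
    ∑ i ∈ Finset.Ico 1 T,
      (Psi (-(coord x (i-1))) * Phi (-(coord x i)) - Psi (coord x (i-1)) * Phi (coord x i))

open scoped Classical in
/-- prog(x) = max{i ≥ 1 : x_i ≠ 0} (1-based), and 0 if x = 0. -/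
noncomputable def prog {T : ℕ} (x : EuclideanSpace ℝ (Fin T)) : ℕ :=
  (Finset.univ.filter fun i : Fin T => x i ≠ 0).sup fun i => (i : ℕ) + 1

open MeasureTheory

lemma Psi_eq_zero {z : ℝ} (h : z ≤ 1/2) : Psi z = 0 := if_pos h

lemma Psi_nonneg (z : ℝ) : 0 ≤ Psi z := by
  unfold Psi; split_ifs <;> positivity

lemma Psi_le_exp_one (z : ℝ) : Psi z ≤ Real.exp 1 := by
  unfold Psi
  split_ifs
  · positivity
  · exact Real.exp_le_exp.mpr (by simp only [sub_le_self_iff]; positivity)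

lemma hasDerivAt_Phi (z : ℝ) :
    HasDerivAt Phi (Real.sqrt (Real.exp 1) * Real.exp (-z^2/2)) z := by
  have hint : Integrable fun t : ℝ => Real.exp (-t^2/2) := by
    simpa [div_eq_inv_mul] using integrable_exp_neg_mul_sq (by norm_num : (0:ℝ) < 1/2)
  have hPhi : Phi = fun w => Real.sqrt (Real.exp 1) *
      ((∫ t in Set.Iic 0, Real.exp (-t^2/2)) + ∫ t in (0:ℝ)..w, Real.exp (-t^2/2)) := by
    funext w
    rw [Phi, ← intervalIntegral.integral_Iic_sub_Iic hint.integrableOn hint.integrableOn,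
      add_sub_cancel]
  rw [hPhi]
  exact (((by fun_prop : Continuous fun t : ℝ => Real.exp (-t^2/2)).integral_hasStrictDerivAt
    0 z).hasDerivAt.const_add _).const_mul _

lemma coord_eq_zero_of_prog_le {T : ℕ} (x : EuclideanSpace ℝ (Fin T)) {m : ℕ}
    (hm : prog x ≤ m) : coord x m = 0 := by
  classical
  unfold coord
  split_ifs with h
  · by_contra hne
    have : m + 1 ≤ prog x :=
      Finset.le_sup (f := fun i : Fin T => (i : ℕ) + 1) (s := Finset.univ.filter (x · ≠ 0))
        (b := ⟨m, h⟩) (by simpa using hne)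
    omega
  · rfl

lemma coord_add_smul_single {T : ℕ} (x : EuclideanSpace ℝ (Fin T)) (j : Fin T) (t : ℝ)
    (m : ℕ) :
    coord (x + t • EuclideanSpace.single j 1) m = coord x m + if m = j then t else 0 := by
  unfold coord
  split_ifs <;> simp_all [Fin.ext_iff]

/-- The coordinate preceding `x_i` (0-based), with the convention `x_{-1} = 1`: since
`Ψ(-1) = 0`, this makes the leading term `-Ψ(1)Φ(x₀)` of `f̂_T` one more link of the chain. -/
noncomputable def prevCoord {T : ℕ} (x : EuclideanSpace ℝ (Fin T)) (i : ℕ) : ℝ :=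
  if i = 0 then 1 else coord x (i - 1)

lemma prevCoord_add_smul_single {T : ℕ} (x : EuclideanSpace ℝ (Fin T)) (j : Fin T) (t : ℝ)
    (i : ℕ) :
    prevCoord (x + t • EuclideanSpace.single j 1) i =
      prevCoord x i + if i = j + 1 then t else 0 := by
  unfold prevCoord
  split_ifs <;> simp_all [coord_add_smul_single]; omega

noncomputable def chainLink (a b : ℝ) : ℝ := Psi (-a) * Phi (-b) - Psi a * Phi b

lemma chainLink_eq_zero {a : ℝ} (ha : |a| ≤ 1/2) (b : ℝ) : chainLink a b = 0 := by
  rw [abs_le] at ha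
  simp [chainLink, Psi_eq_zero (z := a) (by linarith), Psi_eq_zero (z := -a) (by linarith)]

lemma hasDerivAt_chainLink (a b : ℝ) :
    HasDerivAt (chainLink a)
      (-(Psi (-a) + Psi a) * (Real.sqrt (Real.exp 1) * Real.exp (-b^2/2))) b := by
  have hneg := (hasDerivAt_Phi (-b)).comp b (hasDerivAt_neg b)
  rw [neg_sq] at hneg
  exact ((hneg.const_mul (Psi (-a))).sub ((hasDerivAt_Phi b).const_mul (Psi a))).congr_deriv
    (by ring)

lemma fhat_eq_sum_chainLink {T : ℕ} (hT : 0 < T) (x : EuclideanSpace ℝ (Fin T)) :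
    fhat T x = ∑ i ∈ Finset.range T, chainLink (prevCoord x i) (coord x i) := by
  rw [Finset.sum_range_eq_add_Ico _ hT, fhat]
  congr 1
  · simp [chainLink, prevCoord, Psi_eq_zero (z := -1) (by norm_num)]
  · refine Finset.sum_congr rfl fun i hi => ?_
    simp [chainLink, prevCoord, Nat.one_le_iff_ne_zero.mp (Finset.mem_Ico.mp hi).1]

lemma fhat_add_smul_single {T : ℕ} (x : EuclideanSpace ℝ (Fin T)) (j : Fin T)
    (hj : prog x ≤ j) {t : ℝ} (ht : |t| ≤ 1/2) :
    fhat T (x + t • EuclideanSpace.single j 1) =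
      fhat T x + (chainLink (prevCoord x j) t - chainLink (prevCoord x j) 0) := by
  have hxj : coord x j = 0 := coord_eq_zero_of_prog_le x hj
  have hlink : ∀ i ∈ Finset.range T,
      chainLink (prevCoord (x + t • EuclideanSpace.single j 1) i)
          (coord (x + t • EuclideanSpace.single j 1) i) =
        chainLink (prevCoord x i) (coord x i) +
          if i = j then chainLink (prevCoord x j) t - chainLink (prevCoord x j) 0 else 0 := by
    intro i _
    rw [coord_add_smul_single, prevCoord_add_smul_single]
    by_cases hij : i = j
    · subst hij
      simp [hxj]
    by_cases hij' : i = j + 1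
    · subst hij'
      have hprev : prevCoord x (j + 1) = 0 := by simp [prevCoord, hxj]
      simp [hprev, coord_eq_zero_of_prog_le x (m := j + 1) (by omega), chainLink_eq_zero ht,
        chainLink_eq_zero (a := 0) (by norm_num)]
    · simp [hij, hij']
  rw [fhat_eq_sum_chainLink j.pos, fhat_eq_sum_chainLink j.pos, Finset.sum_congr rfl hlink,
    Finset.sum_add_distrib, Finset.sum_ite_eq', if_pos (Finset.mem_range.mpr j.isLt)]

lemma gradient_apply_eq_of_hasDerivAt {ι : Type*} [Fintype ι] [DecidableEq ι]
    {f : EuclideanSpace ℝ ι → ℝ} {x : EuclideanSpace ℝ ι} (hf : DifferentiableAt ℝ f x)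
    (j : ι) {d : ℝ} (hd : HasDerivAt (fun t : ℝ => f (x + t • EuclideanSpace.single j 1)) d 0) :
    gradient f x j = d := by
  have hline : HasDerivAt (fun t : ℝ => x + t • EuclideanSpace.single j (1 : ℝ))
      (EuclideanSpace.single j 1) 0 := by
    simpa using ((hasDerivAt_id (0 : ℝ)).smul_const (EuclideanSpace.single j (1 : ℝ))).const_add x
  have hcomp := (by simpa using hf.hasFDerivAt : HasFDerivAt f (fderiv ℝ f x)
    (x + (0 : ℝ) • EuclideanSpace.single j 1)).comp_hasDerivAt 0 hline
  rw [hd.unique hcomp, ← inner_gradient_left, EuclideanSpace.inner_single_right]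
  simp

lemma gradient_fhat_apply_of_prog_le {T : ℕ} {x : EuclideanSpace ℝ (Fin T)}
    (hf : DifferentiableAt ℝ (fhat T) x) (j : Fin T) (hj : prog x ≤ j) :
    gradient (fhat T) x j =
      -(Psi (-prevCoord x j) + Psi (prevCoord x j)) * Real.sqrt (Real.exp 1) := by
  refine gradient_apply_eq_of_hasDerivAt hf j ?_
  have hball : ∀ᶠ t : ℝ in nhds 0, |t| ≤ 1/2 := by
    filter_upwards [Metric.closedBall_mem_nhds (0 : ℝ) (by norm_num : (0 : ℝ) < 1/2)] with t ht
    simpa using ht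
  have hlink := ((hasDerivAt_chainLink (prevCoord x j) 0).sub_const
    (chainLink (prevCoord x j) 0)).const_add (fhat T x)
  simp only [zero_pow two_ne_zero, neg_zero, zero_div, Real.exp_zero, mul_one] at hlink
  exact hlink.congr_of_eventuallyEq (hball.mono fun t ht => fhat_add_smul_single x j hj ht)

lemma gradient_fhat_apply_eq_zero_of_prog_lt {T : ℕ} (x : EuclideanSpace ℝ (Fin T))
    (j : Fin T) (hj : prog x < j) : gradient (fhat T) x j = 0 := by
  by_cases hf : DifferentiableAt ℝ (fhat T) x
  · have hprev : prevCoord x j = 0 := by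
      simp [prevCoord, Nat.pos_iff_ne_zero.mp (by omega : 0 < (j : ℕ)),
        coord_eq_zero_of_prog_le x (m := j - 1) (by omega)]
    simp [gradient_fhat_apply_of_prog_le hf j hj.le, hprev, Psi_eq_zero]
  · simp [gradient_eq_zero_of_not_differentiableAt hf]

lemma abs_gradient_fhat_apply_le {T : ℕ} (x : EuclideanSpace ℝ (Fin T)) (j : Fin T)
    (hj : prog x ≤ j) : |gradient (fhat T) x j| ≤ 23 := by
  by_cases hf : DifferentiableAt ℝ (fhat T) x
  · have he : Real.exp 1 < 3 := Real.exp_one_lt_d9.trans (by norm_num)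
    have hsqrt : Real.sqrt (Real.exp 1) ≤ Real.exp 1 :=
      Real.sqrt_le_self_iff.mpr (Or.inr (Real.one_le_exp zero_le_one))
    have ha := Psi_le_exp_one (-prevCoord x j)
    have hb := Psi_le_exp_one (prevCoord x j)
    rw [gradient_fhat_apply_of_prog_le hf j hj, abs_mul, abs_neg,
      abs_of_nonneg (add_nonneg (Psi_nonneg _) (Psi_nonneg _)), abs_of_nonneg (by positivity)]
    nlinarith [Real.sqrt_nonneg (Real.exp 1), Psi_nonneg (prevCoord x j),
      Psi_nonneg (-prevCoord x j)]
  · simp [gradient_eq_zero_of_not_differentiableAt hf]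

lemma norm_sq_tail_eq {T : ℕ} (g : EuclideanSpace ℝ (Fin T)) {m : ℕ}
    (hg : ∀ j : Fin T, m < j → g j = 0) :
    ‖(WithLp.toLp 2 fun j : Fin T => (if m < (j : ℕ) + 1 then (1 : ℝ) else 0) * g j :
        EuclideanSpace ℝ (Fin T))‖ ^ 2 =
      (if h : m < T then g ⟨m, h⟩ else 0) ^ 2 := by
  rw [EuclideanSpace.real_norm_sq_eq]
  split_ifs with h
  · rw [Finset.sum_eq_single_of_mem ⟨m, h⟩ (Finset.mem_univ _) fun j _ hj => ?_]
    · simp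
    have : (j : ℕ) ≠ m := fun hjm => hj (Fin.ext hjm)
    by_cases hmj : m < (j : ℕ) + 1
    · simp [hg j (by omega)]
    · simp [hmj]
  · simp [show ∀ j : Fin T, ¬ m < (j : ℕ) + 1 from fun j => by omega]

lemma eq_indicator_of_zero_or_one {Ω : Type*} {z : Ω → ℝ} (hz : ∀ ω, z ω = 0 ∨ z ω = 1) :
    z = {ω | z ω = 1}.indicator 1 := by
  funext ω
  rcases hz ω with h | h <;> simp [h]

section ZeroOneValued

variable {Ω : Type*} [MeasurableSpace Ω] {μ : Measure Ω} {z : Ω → ℝ}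

lemma integrable_of_zero_or_one [IsFiniteMeasure μ] (hz : ∀ ω, z ω = 0 ∨ z ω = 1)
    (hmeas : Measurable z) : Integrable z μ := by
  rw [eq_indicator_of_zero_or_one hz]
  exact (integrable_const 1).indicator (measurableSet_eq_fun hmeas measurable_const)

lemma integral_of_zero_or_one {p : ℝ} (hp : 0 ≤ p) (hz : ∀ ω, z ω = 0 ∨ z ω = 1)
    (hmeas : Measurable z) (hprob : μ {ω | z ω = 1} = ENNReal.ofReal p) :
    ∫ ω, z ω ∂μ = p := by
  rw [eq_indicator_of_zero_or_one hz,
    integral_indicator_one (measurableSet_eq_fun hmeas measurable_const)]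
  simp [measureReal_def, hprob, hp]

lemma integral_div_sub_one_of_zero_or_one [IsProbabilityMeasure μ] {p : ℝ} (hp : 0 < p)
    (hz : ∀ ω, z ω = 0 ∨ z ω = 1) (hmeas : Measurable z)
    (hprob : μ {ω | z ω = 1} = ENNReal.ofReal p) : ∫ ω, (z ω / p - 1) ∂μ = 0 := by
  rw [integral_sub ((integrable_of_zero_or_one hz hmeas).div_const p) (integrable_const 1),
    integral_div, integral_of_zero_or_one hp.le hz hmeas hprob]
  simp [hp.ne']

lemma integral_div_sub_one_sq_of_zero_or_one [IsProbabilityMeasure μ] {p : ℝ} (hp : 0 < p)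
    (hz : ∀ ω, z ω = 0 ∨ z ω = 1) (hmeas : Measurable z)
    (hprob : μ {ω | z ω = 1} = ENNReal.ofReal p) :
    ∫ ω, (z ω / p - 1) ^ 2 ∂μ = (1 - p) / p := by
  have hsq : ∀ ω, (z ω / p - 1) ^ 2 = (1 / p ^ 2 - 2 / p) * z ω + 1 := fun ω => by
    rcases hz ω with h | h <;> rw [h] <;> field_simp <;> ring
  simp only [hsq]
  rw [integral_add ((integrable_of_zero_or_one hz hmeas).const_mul _) (integrable_const 1),
    integral_const_mul, integral_of_zero_or_one hp.le hz hmeas hprob]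
  simp only [one_div, integral_const, probReal_univ, smul_eq_mul, mul_one]
  field_simp
  ring

end ZeroOneValued

theorem oracle_props_general (T : ℕ) (p : ℝ) (hp : 0 < p) (hp1 : p ≤ 1)
    {Ω : Type*} [MeasurableSpace Ω] (μ : Measure Ω) [IsProbabilityMeasure μ]
    (z : Ω → ℝ) (hz : ∀ ω, z ω = 0 ∨ z ω = 1) (hmeas : Measurable z)
    (hprob : μ {ω | z ω = 1} = ENNReal.ofReal p)
    (x : EuclideanSpace ℝ (Fin T))
    (ghat : Ω → EuclideanSpace ℝ (Fin T))
    (hghat : ∀ ω (j : Fin T), ghat ω j =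
      gradient (fhat T) x j *
        (1 + (if prog x < (j : ℕ) + 1 then (1 : ℝ) else 0) * (z ω / p - 1))) :
    (∫ ω, ghat ω ∂μ) = gradient (fhat T) x ∧
    (∫ ω, ‖ghat ω - gradient (fhat T) x‖ ^ 2 ∂μ) =
      (if h : prog x < T then gradient (fhat T) x ⟨prog x, h⟩ else 0) ^ 2 * (1 - p) / p ∧
    (if h : prog x < T then gradient (fhat T) x ⟨prog x, h⟩ else 0) ^ 2 * (1 - p) / p ≤
      23 ^ 2 * (1 - p) / p := by
  set g := gradient (fhat T) x
  set v : EuclideanSpace ℝ (Fin T) :=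
    WithLp.toLp 2 fun j => (if prog x < (j : ℕ) + 1 then (1 : ℝ) else 0) * g j
  have hghat_eq : ∀ ω, ghat ω = g + (z ω / p - 1) • v := fun ω => by
    ext j
    simp only [hghat, v, PiLp.add_apply, PiLp.smul_apply, smul_eq_mul]
    ring
  have hnoise : Integrable (fun ω => z ω / p - 1) μ :=
    ((integrable_of_zero_or_one hz hmeas).div_const p).sub (integrable_const 1)
  have hv : ‖v‖ ^ 2 = (if h : prog x < T then g ⟨prog x, h⟩ else 0) ^ 2 :=
    norm_sq_tail_eq g fun j hj => gradient_fhat_apply_eq_zero_of_prog_lt x j hj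
  refine ⟨?_, ?_, ?_⟩
  · simp_rw [hghat_eq]
    rw [integral_add (integrable_const g) (hnoise.smul_const v), integral_smul_const,
      integral_div_sub_one_of_zero_or_one hp hz hmeas hprob]
    simp
  · simp_rw [hghat_eq, add_sub_cancel_left, norm_smul, mul_pow, Real.norm_eq_abs, sq_abs]
    rw [integral_mul_const, integral_div_sub_one_sq_of_zero_or_one hp hz hmeas hprob, hv]
    ring
  · have hK : (if h : prog x < T then g ⟨prog x, h⟩ else 0) ^ 2 ≤ 23 ^ 2 := by
      split_ifs with h
      · exact sq_le_sq.mpr ((abs_gradient_fhat_apply_le x ⟨prog x, h⟩ le_rfl).trans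
          (le_abs_self 23))
      · norm_num
    have h1p : 0 ≤ 1 - p := sub_nonneg.mpr hp1
    gcongr

/-- The stochastic oracle ĝ(x)_j = ∂_j f̂_T(x)·(1 + 1{j > prog(x)}(z/p − 1)) with z
Bernoulli(p) is unbiased, E[ĝ(x)] = ∇f̂_T(x), and its variance satisfies
E‖ĝ(x) − ∇f̂_T(x)‖² = |∂_{prog(x)+1} f̂_T(x)|²·(1−p)/p ≤ 23²(1−p)/p, where the partial
derivative is interpreted as 0 if prog(x) = T. -/
theorem oracle_props (T : ℕ) (hT : 1 ≤ T) (p : ℝ) (hp : 0 < p) (hp1 : p ≤ 1)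
    {Ω : Type*} [MeasurableSpace Ω] (μ : Measure Ω) [IsProbabilityMeasure μ]
    (z : Ω → ℝ) (hz : ∀ ω, z ω = 0 ∨ z ω = 1) (hmeas : Measurable z)
    (hprob : μ {ω | z ω = 1} = ENNReal.ofReal p)
    (x : EuclideanSpace ℝ (Fin T))
    (ghat : Ω → EuclideanSpace ℝ (Fin T))
    (hghat : ∀ ω (j : Fin T), ghat ω j =
      gradient (fhat T) x j *
        (1 + (if prog x < (j : ℕ) + 1 then (1 : ℝ) else 0) * (z ω / p - 1))) :
    (∫ ω, ghat ω ∂μ) = gradient (fhat T) x ∧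
    (∫ ω, ‖ghat ω - gradient (fhat T) x‖ ^ 2 ∂μ) =
      (if h : prog x < T then gradient (fhat T) x ⟨prog x, h⟩ else 0) ^ 2 * (1 - p) / p ∧
    (if h : prog x < T then gradient (fhat T) x ⟨prog x, h⟩ else 0) ^ 2 * (1 - p) / p ≤
      23 ^ 2 * (1 - p) / p :=
  oracle_props_general T p hp hp1 μ z hz hmeas hprob x ghat hghat
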